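/- arXiv:2602.16209 — 2 statements merged into one kernel-verified Lean document; each statement's English description precedes it below -/
import Mathlib

section
/- Let L be a natural number, let A₀, …, A_{L−1} be real C × C skew-symmetric matrices, let α be a real number, and let z₀ ∈ ℝ^C. Define the sequence z_{l+1} = (I + α A_l) z_l for l = 0, …, L−1. Then ‖z_L‖₂ ≤ (∏_{l=0}^{L−1} sqrt(1 + α² ‖A_l‖₂²)) · ‖z₀‖₂. -/
open Matrix

/-- The operator norm of a real square matrix induced by the Euclidean norm. -/
noncomputable def opNorm2 {C : ℕ} (A : Matrix (Fin C) (Fin C) ℝ) : ℝ :=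
  ‖Matrix.toEuclideanCLM (𝕜 := ℝ) A‖

/-!
A skew-symmetric `A` satisfies `⟪x, A x⟫ = 0`, so `x` and `α A x` are orthogonal and Pythagoras
gives `‖(I + α A) x‖² = ‖x‖² + α² ‖A x‖² ≤ (1 + α² ‖A‖²) ‖x‖²`. Each layer therefore multiplies
the norm by at most `√(1 + α² ‖A_l‖²)`, and the bound follows by induction on the number of layers.
-/

open scoped RealInnerProductSpace

theorem le_prod_range_mul_of_le_mul {u c : ℕ → ℝ} {L : ℕ} (hc : ∀ l < L, 0 ≤ c l)
    (hu : ∀ l < L, u (l + 1) ≤ c l * u l) :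
    u L ≤ (∏ l ∈ Finset.range L, c l) * u 0 := by
  induction L with
  | zero => simp
  | succ n ih =>
    calc u (n + 1) ≤ c n * u n := hu n n.lt_succ_self
      _ ≤ c n * ((∏ l ∈ Finset.range n, c l) * u 0) :=
          mul_le_mul_of_nonneg_left
            (ih (fun l hl ↦ hc l (hl.trans n.lt_succ_self))
              (fun l hl ↦ hu l (hl.trans n.lt_succ_self)))
            (hc n n.lt_succ_self)
      _ = (∏ l ∈ Finset.range (n + 1), c l) * u 0 := by rw [Finset.prod_range_succ]; ring

theorem ContinuousLinearMap.norm_add_smul_apply_le {E : Type*} [NormedAddCommGroup E]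
    [InnerProductSpace ℝ E] (T : E →L[ℝ] E) (hT : ∀ x, ⟪x, T x⟫ = 0) (α : ℝ) (x : E) :
    ‖x + α • T x‖ ≤ √(1 + α ^ 2 * ‖T‖ ^ 2) * ‖x‖ := by
  have pythagoras : ‖x + α • T x‖ ^ 2 = ‖x‖ ^ 2 + α ^ 2 * ‖T x‖ ^ 2 := by
    have h := norm_add_sq_eq_norm_sq_add_norm_sq_real (x := x) (y := α • T x)
      (by rw [inner_smul_right, hT, mul_zero])
    rw [sq, sq, h, norm_smul, Real.norm_eq_abs, ← sq_abs α]
    ring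
  have hTx : α ^ 2 * ‖T x‖ ^ 2 ≤ α ^ 2 * (‖T‖ * ‖x‖) ^ 2 := by
    gcongr
    exact T.le_opNorm x
  refine le_of_sq_le_sq ?_ (by positivity)
  rw [mul_pow, Real.sq_sqrt (by positivity), pythagoras]
  linarith [mul_pow ‖T‖ ‖x‖ 2]

theorem Matrix.inner_toEuclideanCLM_self_eq_zero {n : Type*} [Fintype n] [DecidableEq n]
    {A : Matrix n n ℝ} (hA : Aᵀ = -A) (x : EuclideanSpace ℝ n) :
    ⟪x, toEuclideanCLM (𝕜 := ℝ) A x⟫ = 0 := by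
  rw [inner_toEuclideanCLM]
  have h : x ⬝ᵥ A *ᵥ x = -(x ⬝ᵥ A *ᵥ x) := by
    conv_lhs => rw [dotProduct_mulVec, ← mulVec_transpose, hA, dotProduct_comm]
    rw [neg_mulVec, dotProduct_neg]
  linarith

/-- Multi-layer composition growth bound: for skew-symmetric generators `A_l` and
updates `z_{l+1} = (I + α A_l) z_l`, one has
`‖z_L‖₂ ≤ (∏_{l<L} sqrt(1 + α² ‖A_l‖₂²)) · ‖z₀‖₂`. -/
theorem multi_layer_growth_bound (C L : ℕ) (A : ℕ → Matrix (Fin C) (Fin C) ℝ)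
    (hA : ∀ l, (A l)ᵀ = -(A l)) (α : ℝ) (z : ℕ → EuclideanSpace ℝ (Fin C))
    (hz : ∀ l < L, z (l + 1)
      = (WithLp.toLp 2 (((1 : Matrix (Fin C) (Fin C) ℝ) + α • A l).mulVec (z l) : Fin C → ℝ) :
          EuclideanSpace ℝ (Fin C))) :
    ‖z L‖ ≤ (∏ l ∈ Finset.range L, Real.sqrt (1 + α ^ 2 * opNorm2 (A l) ^ 2)) * ‖z 0‖ := by
  refine le_prod_range_mul_of_le_mul (u := fun l ↦ ‖z l‖) (fun _ _ ↦ Real.sqrt_nonneg _)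
    fun l hl ↦ ?_
  have layer : z (l + 1) = z l + α • toEuclideanCLM (𝕜 := ℝ) (A l) (z l) := by
    rw [hz l hl, ← toEuclideanCLM_toLp, WithLp.toLp_ofLp, map_add, map_smul, map_one]
    rfl
  rw [layer]
  exact (toEuclideanCLM (𝕜 := ℝ) (A l)).norm_add_smul_apply_le
    (inner_toEuclideanCLM_self_eq_zero (hA l)) α _
end

section
/- Let L be a natural number, let A₀, …, A_{L−1} be real C × C skew-symmetric matrices, let α and M ≥ 0 be real numbers with ‖A_l‖₂ ≤ M for all l, and let z₀ ∈ ℝ^C. Define z_{l+1} = (I + α A_l) z_l for l = 0, …, L−1. Then ‖z_L‖₂ ≤ (1 + α² M²)^{L/2} · ‖z₀‖₂. -/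
/-!
Skew-symmetry of `A` makes `A z` orthogonal to `z`, so by Pythagoras
`‖(I + α A) z‖² = ‖z‖² + α² ‖A z‖² ≤ (1 + α² M²) ‖z‖²`: each layer multiplies the norm by at
most `√(1 + α² M²)`.
-/

open Matrix

open scoped RealInnerProductSpace

theorem Matrix.dotProduct_mulVec_self_eq_zero_of_transpose_eq_neg {ι R : Type*} [Fintype ι]
    [CommRing R] [IsAddTorsionFree R] {A : Matrix ι ι R} (hA : Aᵀ = -A) (x : ι → R) :
    x ⬝ᵥ A *ᵥ x = 0 :=
  self_eq_neg.mp <| calc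
    x ⬝ᵥ A *ᵥ x = Aᵀ *ᵥ x ⬝ᵥ x := by rw [dotProduct_mulVec, mulVec_transpose]
    _ = -(x ⬝ᵥ A *ᵥ x) := by rw [hA, neg_mulVec, neg_dotProduct, dotProduct_comm]

theorem Matrix.inner_self_toEuclideanCLM_eq_zero_of_transpose_eq_neg {ι : Type*} [Fintype ι]
    [DecidableEq ι] {A : Matrix ι ι ℝ} (hA : Aᵀ = -A) (x : EuclideanSpace ℝ ι) :
    ⟪x, toEuclideanCLM (𝕜 := ℝ) A x⟫ = 0 := by
  rw [inner_toEuclideanCLM]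
  exact dotProduct_mulVec_self_eq_zero_of_transpose_eq_neg hA _

theorem Matrix.toLp_one_add_smul_mulVec {ι : Type*} [Fintype ι] [DecidableEq ι]
    (A : Matrix ι ι ℝ) (α : ℝ) (x : EuclideanSpace ℝ ι) :
    WithLp.toLp 2 ((1 + α • A) *ᵥ x) = x + α • toEuclideanCLM (𝕜 := ℝ) A x := by
  ext i
  simp [add_mulVec, smul_mulVec]

theorem norm_add_smul_le_sqrt_mul_of_inner_eq_zero {E : Type*} [NormedAddCommGroup E]
    [InnerProductSpace ℝ E] {x y : E} (hxy : ⟪x, y⟫ = 0) {M : ℝ} (hy : ‖y‖ ≤ M * ‖x‖) (α : ℝ) :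
    ‖x + α • y‖ ≤ √(1 + α ^ 2 * M ^ 2) * ‖x‖ := by
  have hpyth : ‖x + α • y‖ ^ 2 = ‖x‖ ^ 2 + α ^ 2 * ‖y‖ ^ 2 := by
    have := norm_add_sq_eq_norm_sq_add_norm_sq_real
      (by rw [real_inner_smul_right, hxy, mul_zero] : ⟪x, α • y⟫ = 0)
    rw [norm_smul, Real.norm_eq_abs] at this
    nlinarith [sq_abs α]
  have hy2 : ‖y‖ ^ 2 ≤ M ^ 2 * ‖x‖ ^ 2 := by
    rw [← mul_pow]
    exact pow_le_pow_left₀ (norm_nonneg y) hy 2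
  refine le_of_pow_le_pow_left₀ two_ne_zero (by positivity) ?_
  rw [mul_pow, Real.sq_sqrt (by positivity), hpyth]
  nlinarith [sq_nonneg α]

theorem uniform_multi_layer_growth_bound_general (C L : ℕ) (A : ℕ → Matrix (Fin C) (Fin C) ℝ)
    (hA : ∀ l, (A l)ᵀ = -(A l)) (α M : ℝ)
    (hAM : ∀ l, opNorm2 (A l) ≤ M) (z : ℕ → EuclideanSpace ℝ (Fin C))
    (hz : ∀ l < L, z (l + 1)
      = (WithLp.toLp 2 (((1 : Matrix (Fin C) (Fin C) ℝ) + α • A l).mulVec (z l) : Fin C → ℝ) :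
          EuclideanSpace ℝ (Fin C))) :
    ‖z L‖ ≤ (1 + α ^ 2 * M ^ 2) ^ ((L : ℝ) / 2) * ‖z 0‖ := by
  have hstep : ∀ l < L, ‖z (l + 1)‖ ≤ √(1 + α ^ 2 * M ^ 2) * ‖z l‖ := fun l hl => by
    rw [hz l hl, toLp_one_add_smul_mulVec]
    exact norm_add_smul_le_sqrt_mul_of_inner_eq_zero
      (inner_self_toEuclideanCLM_eq_zero_of_transpose_eq_neg (hA l) _)
      ((toEuclideanCLM (𝕜 := ℝ) (A l)).le_of_opNorm_le (hAM l) _) α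
  calc ‖z L‖ ≤ √(1 + α ^ 2 * M ^ 2) ^ L * ‖z 0‖ :=
        le_geom (u := fun l => ‖z l‖) (Real.sqrt_nonneg _) L hstep
    _ = (1 + α ^ 2 * M ^ 2) ^ ((L : ℝ) / 2) * ‖z 0‖ := by
      rw [Real.sqrt_eq_rpow, ← Real.rpow_natCast, ← Real.rpow_mul (by positivity)]
      ring_nf

/-- Uniform multi-layer growth bound: for skew-symmetric generators `A_l` with
`‖A_l‖₂ ≤ M` and updates `z_{l+1} = (I + α A_l) z_l`, one has
`‖z_L‖₂ ≤ (1 + α² M²)^{L/2} · ‖z₀‖₂`. -/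
theorem uniform_multi_layer_growth_bound (C L : ℕ) (A : ℕ → Matrix (Fin C) (Fin C) ℝ)
    (hA : ∀ l, (A l)ᵀ = -(A l)) (α M : ℝ) (hM : 0 ≤ M)
    (hAM : ∀ l, opNorm2 (A l) ≤ M) (z : ℕ → EuclideanSpace ℝ (Fin C))
    (hz : ∀ l < L, z (l + 1)
      = (WithLp.toLp 2 (((1 : Matrix (Fin C) (Fin C) ℝ) + α • A l).mulVec (z l) : Fin C → ℝ) :
          EuclideanSpace ℝ (Fin C))) :
    ‖z L‖ ≤ (1 + α ^ 2 * M ^ 2) ^ ((L : ℝ) / 2) * ‖z 0‖ :=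
  uniform_multi_layer_growth_bound_general C L A hA α M hAM z hz
end
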